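/- Let S be a nonempty subset of ℝⁿ, let K ≥ 1, and for each i ∈ {1,…,K} let f̄_i : ℝⁿ → ℝ be a function and h_i : ℝ → ℝ be nondecreasing. Suppose each f̄_i attains its minimum over S, with minimum value F̄_i. Let i* ∈ {1,…,K} satisfy h_{i*}(F̄_{i*}) ≤ h_i(F̄_i) for all i, and let x* ∈ S satisfy f̄_{i*}(x*) = F̄_{i*}. Then x* is a global minimizer of f̂ over S, i.e., f̂(x*) ≤ f̂(x) for every x ∈ S. -/
import Mathlib

/-- decomposition of the surrogate minimization: solving each convex
subproblem, selecting the best component `i*`, and taking a minimizer `x*` of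
`f̄_{i*}` over `S` yields a global minimizer of `f̂(x) = min_i h_i (f̄_i x)` over `S`. -/
theorem surrogate_decomposition_minimizer {n K : ℕ} (hK : 1 ≤ K)
    (S : Set (Fin n → ℝ)) (hS : S.Nonempty)
    (fbar : Fin K → (Fin n → ℝ) → ℝ) (h : Fin K → ℝ → ℝ)
    (hmono : ∀ i, Monotone (h i))
    (Fbar : Fin K → ℝ)
    (hattain : ∀ i, ∃ x ∈ S, fbar i x = Fbar i)
    (hminval : ∀ i, ∀ x ∈ S, Fbar i ≤ fbar i x)
    (istar : Fin K) (histar : ∀ i, h istar (Fbar istar) ≤ h i (Fbar i))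
    (xstar : Fin n → ℝ) (hxS : xstar ∈ S) (hxval : fbar istar xstar = Fbar istar) :
    ∀ x ∈ S,
      (Finset.univ.inf' (Finset.univ_nonempty_iff.mpr ⟨⟨0, hK⟩⟩)
          fun i => h i (fbar i xstar)) ≤
      (Finset.univ.inf' (Finset.univ_nonempty_iff.mpr ⟨⟨0, hK⟩⟩)
          fun i => h i (fbar i x)) := by
  intro x hx
  apply Finset.le_inf'
  intro i _
  calc Finset.univ.inf' (Finset.univ_nonempty_iff.mpr ⟨⟨0, hK⟩⟩)
        (fun i => h i (fbar i xstar)) ≤ h istar (fbar istar xstar) :=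
        Finset.inf'_le _ (Finset.mem_univ _)
    _ = h istar (Fbar istar) := by rw [hxval]
    _ ≤ h i (Fbar i) := histar i
    _ ≤ h i (fbar i x) := hmono i (hminval i x hx)
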